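/- arXiv:2208.14379 — 2 statements merged into one kernel-verified Lean document; each statement's English description precedes it below -/
import Mathlib

section
/- Let Φ(t) be the fundamental solution of the linear ODE Φ'(t) = J(t)Φ(t), Φ(0) = I_n, where J : ℝ → ℝ^{n×n} is continuous. Then the k-th multiplicative compound Φ^(k)(t) satisfies the linear ODE d/dt Φ^(k)(t) = J^[k](t) Φ^(k)(t) with Φ^(k)(0) = I_r, r = (n choose k). -/
/-!
`compound k M` is the matrix of `⋀ᵏ M` in the basis of wedges of standard basis vectors, so
functoriality of exterior powers makes `compound k` multiplicative (Cauchy–Binet) and unital.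
By Jacobi's formula the derivative of `s ↦ Φ(s)^(k)` at `t` depends only on `Φ(t)` and `Φ'(t)`.
The curve `ε ↦ (1 + ε J(t)) Φ(t)` has the same value and derivative at `ε = 0`, and along it
`Φ^(k) = (1 + ε J(t))^(k) Φ(t)^(k)`, whose derivative at `0` is `J(t)^[k] Φ(t)^(k)`.
-/

/-- The k-th multiplicative compound of a matrix: the matrix of all k×k minors,
indexed by k-element subsets of the row and column index sets. -/
noncomputable def compound {R : Type*} [CommRing R] {n m : ℕ} (k : ℕ)
    (A : Matrix (Fin n) (Fin m) R) :
    Matrix {s : Finset (Fin n) // s.card = k} {s : Finset (Fin m) // s.card = k} R :=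
  fun I J => Matrix.det (Matrix.of fun i j : Fin k =>
    A ((I.1.orderIsoOfFin I.2 i : Fin n)) ((J.1.orderIsoOfFin J.2 j : Fin m)))

/-- The k-th additive compound: `A^[k] := d/dε (I + εA)^(k) |_{ε=0}` (entrywise). -/
noncomputable def addCompound {n : ℕ} (k : ℕ) (A : Matrix (Fin n) (Fin n) ℝ) :
    Matrix {s : Finset (Fin n) // s.card = k} {s : Finset (Fin n) // s.card = k} ℝ :=
  fun I J => deriv (fun ε : ℝ => compound k (1 + ε • A) I J) 0

open Matrix

section Multiplicativity

open Finset

variable {R : Type*} [CommRing R] {n m p k : ℕ}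

def Finset.cardSubtypeEquivPowersetCard (ι : Type*) (k : ℕ) :
    {s : Finset ι // s.card = k} ≃ Set.powersetCard ι k :=
  Equiv.subtypeEquivRight fun _ => Iff.rfl

theorem compound_eq_toMatrix_exteriorPower_map (M : Matrix (Fin n) (Fin m) R) :
    compound k M = (LinearMap.toMatrix ((Pi.basisFun R (Fin m)).exteriorPower k)
      ((Pi.basisFun R (Fin n)).exteriorPower k) (exteriorPower.map k (toLin' M))).submatrix
        (cardSubtypeEquivPowersetCard _ k) (cardSubtypeEquivPowersetCard _ k) := by
  ext I J
  rw [submatrix_apply, LinearMap.toMatrix_apply, exteriorPower.basis_apply,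
    exteriorPower.map_apply_ιMulti_family, exteriorPower.basis_repr_apply,
    exteriorPower.ιMulti_family, exteriorPower.ιMultiDual_apply_ιMulti, ← det_transpose]
  unfold compound
  congr 1
  ext i j
  simp only [of_apply, Set.powersetCard.ofFinEmbEquiv_symm_apply, Function.comp_apply,
    Pi.basisFun_apply, toLin'_apply, mulVec_single, MulOpposite.op_one, one_smul,
    Module.Basis.coord_apply, Pi.basisFun_repr, col_apply, transpose_apply]
  rfl

theorem compound_mul (M : Matrix (Fin n) (Fin m) R) (N : Matrix (Fin m) (Fin p) R) :
    compound k (M * N) = compound k M * compound k N := by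
  simp only [compound_eq_toMatrix_exteriorPower_map, toLin'_mul, exteriorPower.map_comp,
    LinearMap.toMatrix_comp _ ((Pi.basisFun R (Fin m)).exteriorPower k), submatrix_mul_equiv]

theorem compound_one : compound k (1 : Matrix (Fin n) (Fin n) R) = 1 := by
  rw [compound_eq_toMatrix_exteriorPower_map, toLin'_one, exteriorPower.map_id,
    LinearMap.toMatrix_id, submatrix_one_equiv]

end Multiplicativity

section Derivatives

variable {𝕜 : Type*} [NontriviallyNormedField 𝕜]

theorem Matrix.det_updateCol_eq_sum {ι : Type*} [Fintype ι] [DecidableEq ι] (A : Matrix ι ι 𝕜)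
    (j : ι) (c : ι → 𝕜) :
    (A.updateCol j c).det = ∑ σ : Equiv.Perm ι,
      (Equiv.Perm.sign σ : 𝕜) * ((∏ i ∈ Finset.univ.erase j, A (σ i) i) * c (σ j)) := by
  rw [det_apply']
  refine Finset.sum_congr rfl fun σ _ => ?_
  rw [← Finset.prod_erase_mul _ _ (Finset.mem_univ j)]
  congr 2
  · exact Finset.prod_congr rfl fun i hi => updateCol_ne (Finset.ne_of_mem_erase hi)
  · exact updateCol_self

theorem HasDerivAt.det {ι : Type*} [Fintype ι] [DecidableEq ι] {f : 𝕜 → Matrix ι ι 𝕜}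
    {f' : Matrix ι ι 𝕜} {t : 𝕜}
    (hf : ∀ i j, HasDerivAt (fun s => f s i j) (f' i j) t) :
    HasDerivAt (fun s => (f s).det) (∑ j, ((f t).updateCol j fun i => f' i j).det) t := by
  simp only [det_updateCol_eq_sum]
  simp only [det_apply']
  rw [Finset.sum_comm]
  refine HasDerivAt.fun_sum fun σ _ => ?_
  simp only [← Finset.mul_sum, ← smul_eq_mul (a := ∏ i ∈ _, _)]
  exact (HasDerivAt.fun_finsetProd fun i _ => hf (σ i) i).const_mul _

theorem hasDerivAt_mul_const_apply {ι κ μ : Type*} [Fintype κ] {f : 𝕜 → Matrix ι κ 𝕜}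
    {f' : Matrix ι κ 𝕜} {t : 𝕜}
    (hf : ∀ i j, HasDerivAt (fun s => f s i j) (f' i j) t) (C : Matrix κ μ 𝕜) (i : ι) (j : μ) :
    HasDerivAt (fun s => (f s * C) i j) ((f' * C) i j) t := by
  simp only [mul_apply]
  exact HasDerivAt.fun_sum fun l _ => (hf i l).mul_const _

theorem hasDerivAt_one_add_smul_apply {ι : Type*} [DecidableEq ι] (A : Matrix ι ι 𝕜) (t : 𝕜)
    (i j : ι) :
    HasDerivAt (fun s => (1 + s • A) i j) (A i j) t := by
  simpa using ((hasDerivAt_id t).mul_const (A i j)).const_add ((1 : Matrix ι ι 𝕜) i j)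

variable {n m k : ℕ}

theorem hasDerivAt_compound_apply {f : 𝕜 → Matrix (Fin n) (Fin m) 𝕜}
    {f' : Matrix (Fin n) (Fin m) 𝕜} {t : 𝕜} (hf : ∀ i j, HasDerivAt (fun s => f s i j) (f' i j) t)
    (I J) :
    HasDerivAt (fun s => compound k (f s) I J)
      (∑ j, (((f t).submatrix (I.1.orderEmbOfFin I.2) (J.1.orderEmbOfFin J.2)).updateCol j
        fun i => f'.submatrix (I.1.orderEmbOfFin I.2) (J.1.orderEmbOfFin J.2) i j).det) t :=
  HasDerivAt.det fun _ _ => hf _ _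

theorem hasDerivAt_addCompound (A : Matrix (Fin n) (Fin n) ℝ) (I J) :
    HasDerivAt (fun ε : ℝ => compound k (1 + ε • A) I J) (addCompound k A I J) 0 :=
  (hasDerivAt_compound_apply (hasDerivAt_one_add_smul_apply A 0) I J).differentiableAt.hasDerivAt

end Derivatives

theorem compound_fundamental_solution_general {n k : ℕ}
    (Jm : ℝ → Matrix (Fin n) (Fin n) ℝ) (Φ : ℝ → Matrix (Fin n) (Fin n) ℝ)
    (hΦ : ∀ (t : ℝ) (i j : Fin n), HasDerivAt (fun s => Φ s i j) ((Jm t * Φ t) i j) t)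
    (hΦ0 : Φ 0 = 1) :
    (∀ (t : ℝ) (I J : {s : Finset (Fin n) // s.card = k}),
        HasDerivAt (fun s => compound k (Φ s) I J)
          ((addCompound k (Jm t) * compound k (Φ t)) I J) t) ∧
      compound k (Φ 0) = 1 := by
  refine ⟨fun t I J => ?_, by rw [hΦ0, compound_one]⟩
  have hcurve := hasDerivAt_mul_const_apply (hasDerivAt_one_add_smul_apply (Jm t) 0) (Φ t)
  have hprod : HasDerivAt (fun ε : ℝ => compound k ((1 + ε • Jm t) * Φ t) I J)
      ((addCompound k (Jm t) * compound k (Φ t)) I J) 0 := by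
    simp only [compound_mul]
    exact hasDerivAt_mul_const_apply (hasDerivAt_addCompound (Jm t)) _ I J
  have hjet := hasDerivAt_compound_apply hcurve I J
  rw [zero_smul, add_zero, one_mul] at hjet
  exact (hasDerivAt_compound_apply (hΦ t) I J).congr_deriv (hjet.unique hprod)

/-- If `Φ` is the fundamental solution of `Φ' = J(t)Φ`, `Φ(0) = I`, with `J` continuous,
then the k-th multiplicative compound satisfies `(Φ^(k))' = J^[k](t) Φ^(k)`,
`Φ^(k)(0) = I` (all statements entrywise). -/
theorem compound_fundamental_solution {n k : ℕ} (hk1 : 1 ≤ k) (hkn : k ≤ n)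
    (Jm : ℝ → Matrix (Fin n) (Fin n) ℝ) (Φ : ℝ → Matrix (Fin n) (Fin n) ℝ)
    (hJcont : ∀ i j : Fin n, Continuous fun t => Jm t i j)
    (hΦ : ∀ (t : ℝ) (i j : Fin n), HasDerivAt (fun s => Φ s i j) ((Jm t * Φ t) i j) t)
    (hΦ0 : Φ 0 = 1) :
    (∀ (t : ℝ) (I J : {s : Finset (Fin n) // s.card = k}),
        HasDerivAt (fun s => compound k (Φ s) I J)
          ((addCompound k (Jm t) * compound k (Φ t)) I J) t) ∧
      compound k (Φ 0) = 1 :=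
  compound_fundamental_solution_general Jm Φ hΦ hΦ0
end

section
/- Along any solution x(t) of the Andronov–Hopf oscillator starting at a in the annulus Ω = {γ₁ ≤ x₁²+x₂² ≤ γ₂} with 0 < γ₁ < 1 < γ₂, the time integral of the logarithmic norm of the Jacobian is uniformly bounded: ∫₀ᵗ (1 − x₁(s)² − x₂(s)²) ds ≤ (1/(2γ₁)) max{γ₂ − 1, 1 − γ₁} for all t ≥ 0. -/
/-!
The squared radius `u = x₁² + x₂²` of a Hopf trajectory solves the logistic equation
`u' = 2 (1 - u) u`, so `u t = u 0 * exp (2 ∫₀ᵗ (1 - u))` and the integral in question is exactly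
`log (u t / u 0) / 2`. Writing `u - 1 = (u 0 - 1) * exp (-2 ∫₀ᵗ u)` shows `u t ≤ max (u 0) 1`, and
`log y ≤ y - 1` turns this into the stated bound.
-/

open Real Set

theorem eq_mul_exp_integral_of_hasDerivAt {f g : ℝ → ℝ} (hg : Continuous g)
    (hf : ∀ s, HasDerivAt f (g s * f s) s) (a t : ℝ) :
    f t = f a * exp (∫ s in a..t, g s) := by
  set G := fun s => ∫ r in a..s, g r
  have hconst : ∀ s, HasDerivAt (fun s => f s * exp (-G s)) 0 s := fun s => by
    have hG : HasDerivAt G (g s) s := (hg.integral_hasStrictDerivAt a s).hasDerivAt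
    exact ((hf s).fun_mul hG.neg.exp).congr_deriv (by ring)
  have h := is_const_of_deriv_eq_zero (fun s => (hconst s).differentiableAt)
    (fun s => (hconst s).deriv) t a
  simp only [G, intervalIntegral.integral_same, neg_zero, exp_zero, mul_one] at h
  rw [← h, mul_assoc, ← exp_add, neg_add_cancel, exp_zero, mul_one]

section Logistic

variable {u : ℝ → ℝ}

theorem logistic_eq_mul_exp (hu : ∀ s, HasDerivAt u (2 * (1 - u s) * u s) s) (t : ℝ) :
    u t = u 0 * exp (∫ s in 0..t, 2 * (1 - u s)) :=
  eq_mul_exp_integral_of_hasDerivAt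
    (continuous_const.mul (continuous_const.sub
      (continuous_iff_continuousAt.2 fun s => (hu s).continuousAt))) hu 0 t

theorem logistic_pos (hu : ∀ s, HasDerivAt u (2 * (1 - u s) * u s) s) (h0 : 0 < u 0)
    (t : ℝ) : 0 < u t := by
  rw [logistic_eq_mul_exp hu]
  positivity

theorem integral_one_sub_logistic (hu : ∀ s, HasDerivAt u (2 * (1 - u s) * u s) s)
    (h0 : 0 < u 0) (t : ℝ) :
    ∫ s in 0..t, (1 - u s) = log (u t / u 0) / 2 := by
  rw [logistic_eq_mul_exp hu t, mul_div_cancel_left₀ _ h0.ne', log_exp,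
    intervalIntegral.integral_const_mul]
  ring

theorem logistic_le_max (hu : ∀ s, HasDerivAt u (2 * (1 - u s) * u s) s) (h0 : 0 ≤ u 0)
    {t : ℝ} (ht : 0 ≤ t) : u t ≤ max (u 0) 1 := by
  have hcont : Continuous u := continuous_iff_continuousAt.2 fun s => (hu s).continuousAt
  have hnonneg : ∀ s, 0 ≤ u s := fun s => by
    rw [logistic_eq_mul_exp hu]
    positivity
  have hsub : ∀ s, HasDerivAt (fun s => u s - 1) (-2 * u s * (u s - 1)) s := fun s =>
    ((hu s).sub_const 1).congr_deriv (by ring)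
  have hξ := eq_mul_exp_integral_of_hasDerivAt (g := fun s => -2 * u s)
    (continuous_const.mul hcont) hsub 0 t
  have hdecay : exp (∫ s in 0..t, -2 * u s) ≤ 1 := by
    rw [exp_le_one_iff, intervalIntegral.integral_const_mul]
    nlinarith [intervalIntegral.integral_nonneg (μ := MeasureTheory.volume) ht
      fun s _ => hnonneg s]
  rcases le_total (u 0) 1 with h | h
  · nlinarith [exp_pos (∫ s in 0..t, -2 * u s), le_max_right (u 0) 1]
  · nlinarith [le_max_left (u 0) 1]

end Logistic

theorem log_div_le_of_le_max {γ₁ γ₂ a b : ℝ} (hγ₁ : 0 < γ₁) (ha : a ∈ Icc γ₁ γ₂) (hb : 0 < b)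
    (hba : b ≤ max a 1) : log (b / a) ≤ max (γ₂ - 1) (1 - γ₁) / γ₁ := by
  have ha0 : 0 < a := hγ₁.trans_le ha.1
  have hM : 0 ≤ max (γ₂ - 1) (1 - γ₁) := by
    rcases le_total 1 γ₂ with h | h
    · exact le_max_of_le_left (by linarith)
    · exact le_max_of_le_right (by linarith [ha.1, ha.2])
  have hgap : b - a ≤ max (γ₂ - 1) (1 - γ₁) := by
    rcases le_total a 1 with h | h
    · linarith [max_eq_right h ▸ hba, le_max_right (γ₂ - 1) (1 - γ₁), ha.1]
    · linarith [max_eq_left h ▸ hba, ha.2]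
  calc log (b / a) ≤ b / a - 1 := log_le_sub_one_of_pos (div_pos hb ha0)
    _ = (b - a) / a := by field_simp
    _ ≤ max (γ₂ - 1) (1 - γ₁) / a := by gcongr
    _ ≤ max (γ₂ - 1) (1 - γ₁) / γ₁ := by gcongr; exact ha.1

theorem hasDerivAt_hopf_radius_sq {x₁ x₂ : ℝ → ℝ} {t : ℝ}
    (hx₁ : HasDerivAt x₁ (-x₂ t - x₁ t * (x₁ t ^ 2 + x₂ t ^ 2 - 1)) t)
    (hx₂ : HasDerivAt x₂ (x₁ t - x₂ t * (x₁ t ^ 2 + x₂ t ^ 2 - 1)) t) :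
    HasDerivAt (fun s => x₁ s ^ 2 + x₂ s ^ 2)
      (2 * (1 - (x₁ t ^ 2 + x₂ t ^ 2)) * (x₁ t ^ 2 + x₂ t ^ 2)) t :=
  ((hx₁.fun_pow 2).fun_add (hx₂.fun_pow 2)).congr_deriv (by ring)

theorem hopf_mu_integral_bounded_general (γ₁ γ₂ : ℝ) (hγ₁ : 0 < γ₁)
    (x₁ x₂ : ℝ → ℝ)
    (hx₁ : ∀ t, HasDerivAt x₁ (-x₂ t - x₁ t * ((x₁ t) ^ 2 + (x₂ t) ^ 2 - 1)) t)
    (hx₂ : ∀ t, HasDerivAt x₂ (x₁ t - x₂ t * ((x₁ t) ^ 2 + (x₂ t) ^ 2 - 1)) t)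
    (h0 : γ₁ ≤ (x₁ 0) ^ 2 + (x₂ 0) ^ 2 ∧ (x₁ 0) ^ 2 + (x₂ 0) ^ 2 ≤ γ₂) :
    ∀ t : ℝ, 0 ≤ t →
      ∫ s in (0 : ℝ)..t, (1 - (x₁ s) ^ 2 - (x₂ s) ^ 2) ≤
        (1 / (2 * γ₁)) * max (γ₂ - 1) (1 - γ₁) := by
  intro t ht
  set u := fun s => x₁ s ^ 2 + x₂ s ^ 2
  have hu : ∀ s, HasDerivAt u (2 * (1 - u s) * u s) s := fun s =>
    hasDerivAt_hopf_radius_sq (hx₁ s) (hx₂ s)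
  have hu0 : 0 < u 0 := hγ₁.trans_le h0.1
  calc ∫ s in (0 : ℝ)..t, (1 - x₁ s ^ 2 - x₂ s ^ 2) = log (u t / u 0) / 2 := by
        simp only [sub_sub]
        exact integral_one_sub_logistic hu hu0 t
    _ ≤ max (γ₂ - 1) (1 - γ₁) / γ₁ / 2 := by
        gcongr
        exact log_div_le_of_le_max hγ₁ h0 (logistic_pos hu hu0 t)
          (logistic_le_max hu hu0.le ht)
    _ = 1 / (2 * γ₁) * max (γ₂ - 1) (1 - γ₁) := by ring

/-- Along any solution of the Andronov–Hopf oscillator starting in the annulus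
`Ω = {γ₁ ≤ x₁²+x₂² ≤ γ₂}` (0 < γ₁ < 1 < γ₂), the integral of the logarithmic norm
`μ₂(J(x)) = 1 − x₁² − x₂²` of the Jacobian is uniformly bounded:
`∫₀ᵗ (1 − x₁(s)² − x₂(s)²) ds ≤ (1/(2γ₁)) max{γ₂−1, 1−γ₁}` for all t ≥ 0. -/
theorem hopf_mu_integral_bounded (γ₁ γ₂ : ℝ) (hγ₁ : 0 < γ₁) (h1 : γ₁ < 1) (hγ₂ : 1 < γ₂)
    (x₁ x₂ : ℝ → ℝ)
    (hx₁ : ∀ t, HasDerivAt x₁ (-x₂ t - x₁ t * ((x₁ t) ^ 2 + (x₂ t) ^ 2 - 1)) t)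
    (hx₂ : ∀ t, HasDerivAt x₂ (x₁ t - x₂ t * ((x₁ t) ^ 2 + (x₂ t) ^ 2 - 1)) t)
    (h0 : γ₁ ≤ (x₁ 0) ^ 2 + (x₂ 0) ^ 2 ∧ (x₁ 0) ^ 2 + (x₂ 0) ^ 2 ≤ γ₂) :
    ∀ t : ℝ, 0 ≤ t →
      ∫ s in (0 : ℝ)..t, (1 - (x₁ s) ^ 2 - (x₂ s) ^ 2) ≤
        (1 / (2 * γ₁)) * max (γ₂ - 1) (1 - γ₁) :=
  hopf_mu_integral_bounded_general γ₁ γ₂ hγ₁ x₁ x₂ hx₁ hx₂ h0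
end
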